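/- Positive real lemma. Let n ≥ 1, let (H,F,N) be a minimal triple whose matrix F has all its complex eigenvalues of modulus strictly less than 1, let r₀ ∈ ℝ, and set r_k = H F^{k−1} N for all k ≥ 1. Then (r_k)_{k≥0} is a covariance series if and only if the set 𝒫(H,F,N,r₀) is nonempty. -/

import Mathlib

open Matrix

/-- The block matrix `[[Q(P), S(P)], [S(P)ᵀ, R(P)]]` with `Q(P) = P - F P Fᵀ`,
`S(P) = N - F P Hᵀ` and `R(P) = r₀ - H P Hᵀ`. -/
noncomputable def srBlock {n : ℕ} (H : Matrix (Fin 1) (Fin n) ℝ)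
    (F : Matrix (Fin n) (Fin n) ℝ) (N : Matrix (Fin n) (Fin 1) ℝ) (r0 : ℝ)
    (P : Matrix (Fin n) (Fin n) ℝ) :
    Matrix (Fin n ⊕ Fin 1) (Fin n ⊕ Fin 1) ℝ :=
  Matrix.fromBlocks (P - F * P * Fᵀ) (N - F * P * Hᵀ) (N - F * P * Hᵀ)ᵀ
    (r0 • (1 : Matrix (Fin 1) (Fin 1) ℝ) - H * P * Hᵀ)

/-- The solution set `𝒫(H, F, N, r₀)` of the stochastic realization problem. -/
def srSolSet {n : ℕ} (H : Matrix (Fin 1) (Fin n) ℝ)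
    (F : Matrix (Fin n) (Fin n) ℝ) (N : Matrix (Fin n) (Fin 1) ℝ) (r0 : ℝ) :
    Set (Matrix (Fin n) (Fin n) ℝ) :=
  {P | P.PosSemidef ∧ (srBlock H F N r0 P).PosSemidef}

/-- A real sequence is a covariance series iff all its Toeplitz matrices are
positive semidefinite. -/
def IsCovarianceSeries (r : ℕ → ℝ) : Prop :=
  ∀ m : ℕ,
    (Matrix.of fun i j : Fin (m + 1) => r ((i : ℤ) - (j : ℤ)).natAbs).PosSemidef


namespace KYPaux

/-! ### Generic helpers -/

lemma real_conjTranspose {k l : Type*} (M : Matrix k l ℝ) : Mᴴ = Mᵀ := by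
  ext i j; simp [Matrix.conjTranspose_apply]

lemma psd_congr {k l : Type*} [Fintype k] [Fintype l] {M : Matrix k k ℝ}
    (hM : M.PosSemidef) (B : Matrix l k ℝ) : (B * M * Bᵀ).PosSemidef := by
  have := hM.mul_mul_conjTranspose_same B
  rwa [real_conjTranspose] at this

lemma psd_smul {k : Type*} [Fintype k] {M : Matrix k k ℝ} (hM : M.PosSemidef)
    {c : ℝ} (hc : 0 ≤ c) : (c • M).PosSemidef := by
  refine Matrix.PosSemidef.of_dotProduct_mulVec_nonneg ?_ fun x => ?_
  · unfold Matrix.IsHermitian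
    rw [conjTranspose_smul, hM.1]
    simp
  · have := hM.dotProduct_mulVec_nonneg x
    rw [smul_mulVec, dotProduct_smul]
    exact smul_nonneg hc this

lemma dot_self_nonneg {k : Type*} [Fintype k] (x : k → ℝ) : 0 ≤ x ⬝ᵥ x :=
  Finset.sum_nonneg fun i _ => mul_self_nonneg _

/-- `(B *ᵥ b) ⬝ᵥ y = b ⬝ᵥ (Bᵀ *ᵥ y)`. -/
lemma dotT {k l : Type*} [Fintype k] [Fintype l] (B : Matrix k l ℝ) (b : l → ℝ) (y : k → ℝ) :
    (B *ᵥ b) ⬝ᵥ y = b ⬝ᵥ (Bᵀ *ᵥ y) := by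
  rw [Matrix.dotProduct_mulVec, Matrix.vecMul_transpose]

lemma dot_sym {k : Type*} [Fintype k] {M : Matrix k k ℝ} (hM : Mᵀ = M)
    (x y : k → ℝ) : x ⬝ᵥ M *ᵥ y = y ⬝ᵥ M *ᵥ x := by
  rw [dotProduct_comm, dotT, hM]

lemma mulVec_sum {k l ι : Type*} [Fintype l] (s : Finset ι) (A : Matrix k l ℝ)
    (f : ι → l → ℝ) : A *ᵥ (∑ i ∈ s, f i) = ∑ i ∈ s, A *ᵥ f i := by
  ext j
  simp only [Matrix.mulVec, dotProduct, Finset.sum_apply, Finset.mul_sum]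
  rw [Finset.sum_comm]

lemma dotProduct_sum {k ι : Type*} [Fintype k] (s : Finset ι) (f : ι → k → ℝ) (y : k → ℝ) :
    (∑ i ∈ s, f i) ⬝ᵥ y = ∑ i ∈ s, f i ⬝ᵥ y := by
  simp only [dotProduct, Finset.sum_apply, Finset.sum_mul]
  rw [Finset.sum_comm]

/-- the quadratic form of a symmetric matrix through entrywise limits -/
lemma tendsto_quad {ι : Type*} {L : Filter ι} {Ms : ι → Matrix (Fin 1) (Fin 1) ℝ} : True := trivial

section Defs

variable {n : ℕ} (r : ℕ → ℝ) (H : Matrix (Fin 1) (Fin n) ℝ)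
  (F : Matrix (Fin n) (Fin n) ℝ) (N : Matrix (Fin n) (Fin 1) ℝ)

/-- Toeplitz matrix of size m -/
def Tm (m : ℕ) : Matrix (Fin m) (Fin m) ℝ :=
  Matrix.of fun i j => r ((i : ℤ) - (j : ℤ)).natAbs

/-- controllability-type matrix, columns `F^j N` -/
def Cm (m : ℕ) : Matrix (Fin n) (Fin m) ℝ :=
  Matrix.of fun i j => (F ^ (j : ℕ) * N) i 0

/-- regularized Toeplitz -/
noncomputable def Am (m : ℕ) (ε : ℝ) : Matrix (Fin m) (Fin m) ℝ :=
  Tm r m + ε • (1 : Matrix (Fin m) (Fin m) ℝ)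

/-- regularized finite-past state covariance -/
noncomputable def Pm (m : ℕ) (ε : ℝ) : Matrix (Fin n) (Fin n) ℝ :=
  Cm F N m * (Am r m ε)⁻¹ * (Cm F N m)ᵀ

/-- `H` as a vector -/
def hv : Fin n → ℝ := fun j => H 0 j

/-- `N` as a vector -/
def Nv : Fin n → ℝ := fun i => N i 0

/-- the LMI quadratic form with state matrices `P1` (future) and `P0` (past) -/
noncomputable def Mform (P1 P0 : Matrix (Fin n) (Fin n) ℝ) (v : Fin n → ℝ) (c : ℝ) : ℝ :=
  v ⬝ᵥ P1 *ᵥ v + 2 * c * (v ⬝ᵥ Nv N) + c ^ 2 * r 0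
    - (Fᵀ *ᵥ v + c • hv H) ⬝ᵥ P0 *ᵥ (Fᵀ *ᵥ v + c • hv H)

end Defs

section Basic

variable {n : ℕ} {r : ℕ → ℝ} {H : Matrix (Fin 1) (Fin n) ℝ}
  {F : Matrix (Fin n) (Fin n) ℝ} {N : Matrix (Fin n) (Fin 1) ℝ}

lemma Tm_transpose (m : ℕ) : (Tm r m)ᵀ = Tm r m := by
  ext i j
  simp only [Matrix.transpose_apply, Tm, Matrix.of_apply]
  congr 1
  omega

lemma Tm_psd (hcov : IsCovarianceSeries r) : ∀ m, (Tm r m).PosSemidef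
  | 0 => Matrix.PosSemidef.of_dotProduct_mulVec_nonneg (by ext i j; exact i.elim0) fun x => by simp [dotProduct]
  | (k + 1) => hcov k

lemma Am_transpose (m : ℕ) (ε : ℝ) : (Am r m ε)ᵀ = Am r m ε := by
  unfold Am
  rw [Matrix.transpose_add, Tm_transpose, Matrix.transpose_smul, Matrix.transpose_one]

lemma Am_posDef (hcov : IsCovarianceSeries r) (m : ℕ) {ε : ℝ} (hε : 0 < ε) :
    (Am r m ε).PosDef := by
  have h1 : (ε • (1 : Matrix (Fin m) (Fin m) ℝ)).PosDef := by
    have : ε • (1 : Matrix (Fin m) (Fin m) ℝ) = Matrix.diagonal (fun _ => ε) := by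
      ext i j
      by_cases h : i = j <;> simp [h, Matrix.one_apply, Matrix.diagonal_apply]
    rw [this]
    exact Matrix.PosDef.diagonal (fun i => hε)
  exact Matrix.PosDef.posSemidef_add (Tm_psd hcov m) h1

lemma Am_isUnit_det (hcov : IsCovarianceSeries r) (m : ℕ) {ε : ℝ} (hε : 0 < ε) :
    IsUnit (Am r m ε).det :=
  ((Matrix.isUnit_iff_isUnit_det _).1 (Am_posDef hcov m hε).isUnit)

lemma Ainv_transpose (hcov : IsCovarianceSeries r) (m : ℕ) {ε : ℝ} (hε : 0 < ε) :
    ((Am r m ε)⁻¹)ᵀ = (Am r m ε)⁻¹ := by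
  rw [Matrix.transpose_nonsing_inv, Am_transpose]

lemma Ainv_psd (hcov : IsCovarianceSeries r) (m : ℕ) {ε : ℝ} (hε : 0 < ε) :
    ((Am r m ε)⁻¹).PosSemidef :=
  ((Am_posDef hcov m hε).inv).posSemidef

lemma Pm_transpose (hcov : IsCovarianceSeries r) (m : ℕ) {ε : ℝ} (hε : 0 < ε) :
    (Pm r F N m ε)ᵀ = Pm r F N m ε := by
  unfold Pm
  rw [Matrix.transpose_mul, Matrix.transpose_mul, Matrix.transpose_transpose,
    Ainv_transpose hcov m hε, Matrix.mul_assoc]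

lemma Pm_psd (hcov : IsCovarianceSeries r) (m : ℕ) {ε : ℝ} (hε : 0 < ε) :
    (Pm r F N m ε).PosSemidef :=
  psd_congr (Ainv_psd hcov m hε) (Cm F N m)

end Basic

section Struct

variable {n : ℕ} {r : ℕ → ℝ} {H : Matrix (Fin 1) (Fin n) ℝ}
  {F : Matrix (Fin n) (Fin n) ℝ} {N : Matrix (Fin n) (Fin 1) ℝ}

/-- shift matrix: columns indexed by `Fin m`, `J i j = [i = j+1]` -/
def Jm (m : ℕ) : Matrix (Fin (m+1)) (Fin m) ℝ :=
  Matrix.of fun i j => if i = j.succ then 1 else 0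

/-- first basis vector -/
def e0 (m : ℕ) : Fin (m+1) → ℝ := fun i => if i = 0 then 1 else 0

lemma dot_e0 {m : ℕ} (y : Fin (m+1) → ℝ) : y ⬝ᵥ e0 m = y 0 := by
  simp [e0, dotProduct, mul_ite, mul_one, mul_zero]

lemma Jt_mulVec {m : ℕ} (a : Fin (m+1) → ℝ) :
    (Jm m)ᵀ *ᵥ a = fun j => a j.succ := by
  ext j
  simp [Jm, Matrix.mulVec, dotProduct, ite_mul, one_mul, zero_mul]

lemma JtTJ {m : ℕ} : (Jm m)ᵀ * Tm r (m+1) * Jm m = Tm r m := by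
  ext j j'
  simp only [Matrix.mul_apply, Jm, Matrix.transpose_apply, Matrix.of_apply,
    ite_mul, one_mul, zero_mul, mul_ite, mul_one, mul_zero,
    Finset.sum_ite_eq, Finset.sum_ite_eq', Finset.mem_univ, if_true]
  show (Tm r (m+1)) j.succ j'.succ = Tm r m j j'
  simp only [Tm, Matrix.of_apply, Fin.val_succ]
  congr 1
  omega

lemma CmJ {m : ℕ} : Cm F N (m+1) * Jm m = F * Cm F N m := by
  ext i j
  simp only [Matrix.mul_apply, Jm, Cm, Matrix.of_apply, mul_ite, mul_one, mul_zero,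
    Finset.sum_ite_eq', Finset.mem_univ, if_true, Fin.val_succ]
  rw [pow_succ']
  simp only [Matrix.mul_apply, Finset.sum_mul, Finset.mul_sum, mul_assoc]
  rw [Finset.sum_comm]

lemma Cm_zero_col {m : ℕ} (i : Fin n) : Cm F N (m+1) i 0 = N i 0 := by
  simp [Cm]

lemma w_zero {m : ℕ} (v : Fin n → ℝ) : ((Cm F N (m+1))ᵀ *ᵥ v) 0 = Nv N ⬝ᵥ v := by
  simp only [Matrix.mulVec, dotProduct, Matrix.transpose_apply, Nv]
  refine Finset.sum_congr rfl fun i _ => ?_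
  rw [Cm_zero_col]

lemma JtT_e0 {m : ℕ} (hHFN : ∀ d : ℕ, (H * F ^ d * N) 0 0 = r (d+1)) :
    (Jm m)ᵀ *ᵥ (Tm r (m+1) *ᵥ e0 m) = (Cm F N m)ᵀ *ᵥ hv H := by
  rw [Jt_mulVec]
  ext j
  have hL : (Tm r (m+1) *ᵥ e0 m) j.succ = r (j + 1) := by
    simp only [Matrix.mulVec, dotProduct, e0, mul_ite, mul_one, mul_zero,
      Finset.sum_ite_eq', Finset.mem_univ, if_true, Tm, Matrix.of_apply]
    congr 1
  rw [hL]
  have hR : ((Cm F N m)ᵀ *ᵥ hv H) j = (H * F ^ (j:ℕ) * N) 0 0 := by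
    simp only [Matrix.mulVec, dotProduct, Matrix.transpose_apply, Cm, Matrix.of_apply, hv,
      Matrix.mul_apply, Finset.sum_mul]
    rw [Finset.sum_comm]
    refine Finset.sum_congr rfl fun i _ => Finset.sum_congr rfl fun k _ => by ring
  rw [hR, hHFN]

lemma T_e0_e0 {m : ℕ} : e0 m ⬝ᵥ (Tm r (m+1) *ᵥ e0 m) = r 0 := by
  rw [dotProduct_comm, dot_e0]
  simp [Matrix.mulVec, dotProduct, e0, mul_ite, Tm]

end Struct
section Master

variable {n : ℕ} {r : ℕ → ℝ} {H : Matrix (Fin 1) (Fin n) ℝ}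
  {F : Matrix (Fin n) (Fin n) ℝ} {N : Matrix (Fin n) (Fin 1) ℝ}

lemma A_mulVec_Ainv (hcov : IsCovarianceSeries r) (m : ℕ) {ε : ℝ} (hε : 0 < ε)
    (z : Fin m → ℝ) : Am r m ε *ᵥ ((Am r m ε)⁻¹ *ᵥ z) = z := by
  rw [Matrix.mulVec_mulVec, Matrix.mul_nonsing_inv _ (Am_isUnit_det hcov m hε),
    Matrix.one_mulVec]

lemma T_mulVec_Ainv (hcov : IsCovarianceSeries r) (m : ℕ) {ε : ℝ} (hε : 0 < ε)
    (z : Fin m → ℝ) :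
    Tm r m *ᵥ ((Am r m ε)⁻¹ *ᵥ z) = z - ε • ((Am r m ε)⁻¹ *ᵥ z) := by
  have hT : Tm r m = Am r m ε - ε • 1 := by
    unfold Am; abel
  rw [hT, Matrix.sub_mulVec, A_mulVec_Ainv hcov m hε, smul_mulVec,
    Matrix.one_mulVec]

set_option maxHeartbeats 2000000 in
/-- The master inequality: one Riccati-type step with regularized finite-past
covariances. -/
lemma master (hcov : IsCovarianceSeries r)
    (hHFN : ∀ d : ℕ, (H * F ^ d * N) 0 0 = r (d+1))
    (m : ℕ) {ε : ℝ} (hε : 0 < ε) (v : Fin n → ℝ) (c : ℝ) :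
    -(ε * c ^ 2) ≤ Mform r H F N (Pm r F N (m+1) ε) (Pm r F N m ε) v c := by
  classical
  have hTsym : (Tm r (m+1))ᵀ = Tm r (m+1) := Tm_transpose (m+1)
  set u : Fin n → ℝ := Fᵀ *ᵥ v + c • hv H with hu
  set w : Fin (m+1) → ℝ := (Cm F N (m+1))ᵀ *ᵥ v with hw
  set z : Fin m → ℝ := (Cm F N m)ᵀ *ᵥ u with hz
  set a : Fin (m+1) → ℝ := (Am r (m+1) ε)⁻¹ *ᵥ w with ha
  set b : Fin m → ℝ := (Am r m ε)⁻¹ *ᵥ z with hb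
  set α : Fin (m+1) → ℝ := a + c • e0 m - Jm m *ᵥ b with hα
  -- key mulVec facts
  have hTa : Tm r (m+1) *ᵥ a = w - ε • a := T_mulVec_Ainv hcov (m+1) hε w
  have hTb : Tm r m *ᵥ b = z - ε • b := by
    rw [hb]; exact T_mulVec_Ainv hcov m hε z
  have hCb : Cm F N m *ᵥ b = Pm r F N m ε *ᵥ u := by
    rw [hb, hz, Matrix.mulVec_mulVec, Matrix.mulVec_mulVec]
    rfl
  have hCa : Cm F N (m+1) *ᵥ a = Pm r F N (m+1) ε *ᵥ v := by
    rw [ha, hw, Matrix.mulVec_mulVec, Matrix.mulVec_mulVec]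
    rfl
  -- the six scalar evaluations
  have e1 : a ⬝ᵥ Tm r (m+1) *ᵥ a = v ⬝ᵥ Pm r F N (m+1) ε *ᵥ v - ε * (a ⬝ᵥ a) := by
    rw [hTa, dotProduct_sub, dotProduct_smul, smul_eq_mul]
    congr 1
    rw [hw, ← dotT, hCa, dotProduct_comm]
  have e2 : a ⬝ᵥ Tm r (m+1) *ᵥ e0 m = Nv N ⬝ᵥ v - ε * a 0 := by
    rw [dot_sym hTsym, dotProduct_comm, dot_e0, hTa]
    simp only [Pi.sub_apply, Pi.smul_apply, smul_eq_mul]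
    rw [hw, w_zero]
  have e3 : e0 m ⬝ᵥ Tm r (m+1) *ᵥ e0 m = r 0 := T_e0_e0
  have e4 : (Jm m *ᵥ b) ⬝ᵥ Tm r (m+1) *ᵥ (Jm m *ᵥ b)
      = u ⬝ᵥ (Cm F N m *ᵥ b) - ε * (b ⬝ᵥ b) := by
    rw [dotT, Matrix.mulVec_mulVec, Matrix.mulVec_mulVec, JtTJ, hTb,
      dotProduct_sub, dotProduct_smul, smul_eq_mul]
    congr 1
    rw [hz, ← dotT, dotProduct_comm]
  have e5 : a ⬝ᵥ Tm r (m+1) *ᵥ (Jm m *ᵥ b)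
      = (Fᵀ *ᵥ v) ⬝ᵥ (Cm F N m *ᵥ b) - ε * (a ⬝ᵥ (Jm m *ᵥ b)) := by
    rw [dot_sym hTsym, hTa, dotProduct_sub, dotProduct_smul, smul_eq_mul,
      dotProduct_comm _ a]
    congr 1
    show (Jm m *ᵥ b) ⬝ᵥ w = (Fᵀ *ᵥ v) ⬝ᵥ (Cm F N m *ᵥ b)
    calc (Jm m *ᵥ b) ⬝ᵥ w
        = b ⬝ᵥ ((Jm m)ᵀ *ᵥ w) := dotT _ _ _
      _ = b ⬝ᵥ ((Cm F N (m+1) * Jm m)ᵀ *ᵥ v) := by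
          rw [hw, Matrix.mulVec_mulVec, ← Matrix.transpose_mul]
      _ = b ⬝ᵥ ((Cm F N m)ᵀ *ᵥ (Fᵀ *ᵥ v)) := by
          rw [CmJ, Matrix.transpose_mul, ← Matrix.mulVec_mulVec]
      _ = (Cm F N m *ᵥ b) ⬝ᵥ (Fᵀ *ᵥ v) := (dotT _ _ _).symm
      _ = (Fᵀ *ᵥ v) ⬝ᵥ (Cm F N m *ᵥ b) := dotProduct_comm _ _
  have e6 : e0 m ⬝ᵥ Tm r (m+1) *ᵥ (Jm m *ᵥ b) = hv H ⬝ᵥ (Cm F N m *ᵥ b) := by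
    rw [dot_sym hTsym, dotT, JtT_e0 hHFN, ← dotT, dotProduct_comm]
  -- the quadratic form of T at α is nonnegative
  have hTpos : 0 ≤ α ⬝ᵥ Tm r (m+1) *ᵥ α := by
    have := (Tm_psd hcov (m+1)).dotProduct_mulVec_nonneg α
    simpa using this
  -- expansion of the quadratic form
  have expand : α ⬝ᵥ Tm r (m+1) *ᵥ α
      = a ⬝ᵥ Tm r (m+1) *ᵥ a
        + c * (a ⬝ᵥ Tm r (m+1) *ᵥ e0 m) + c * (e0 m ⬝ᵥ Tm r (m+1) *ᵥ a)
        + c ^ 2 * (e0 m ⬝ᵥ Tm r (m+1) *ᵥ e0 m)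
        - (a ⬝ᵥ Tm r (m+1) *ᵥ (Jm m *ᵥ b)) - ((Jm m *ᵥ b) ⬝ᵥ Tm r (m+1) *ᵥ a)
        - c * (e0 m ⬝ᵥ Tm r (m+1) *ᵥ (Jm m *ᵥ b))
        - c * ((Jm m *ᵥ b) ⬝ᵥ Tm r (m+1) *ᵥ e0 m)
        + (Jm m *ᵥ b) ⬝ᵥ Tm r (m+1) *ᵥ (Jm m *ᵥ b) := by
    rw [hα]
    simp only [Matrix.mulVec_add, Matrix.mulVec_sub, Matrix.mulVec_smul,
      dotProduct_add, dotProduct_sub, add_dotProduct, sub_dotProduct,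
      smul_dotProduct, dotProduct_smul, smul_eq_mul]
    ring
  have e2' : e0 m ⬝ᵥ Tm r (m+1) *ᵥ a = Nv N ⬝ᵥ v - ε * a 0 := by
    rw [dot_sym hTsym]; exact e2
  have e5' : (Jm m *ᵥ b) ⬝ᵥ Tm r (m+1) *ᵥ a
      = (Fᵀ *ᵥ v) ⬝ᵥ (Cm F N m *ᵥ b) - ε * (a ⬝ᵥ (Jm m *ᵥ b)) := by
    rw [dot_sym hTsym]; exact e5
  have e6' : (Jm m *ᵥ b) ⬝ᵥ Tm r (m+1) *ᵥ e0 m = hv H ⬝ᵥ (Cm F N m *ᵥ b) := by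
    rw [dot_sym hTsym]; exact e6
  have hsplitu : u ⬝ᵥ (Cm F N m *ᵥ b)
      = (Fᵀ *ᵥ v) ⬝ᵥ (Cm F N m *ᵥ b) + c * (hv H ⬝ᵥ (Cm F N m *ᵥ b)) := by
    rw [hu, add_dotProduct, smul_dotProduct, smul_eq_mul]
  have hPu : (Fᵀ *ᵥ v + c • hv H) ⬝ᵥ Pm r F N m ε *ᵥ (Fᵀ *ᵥ v + c • hv H)
      = u ⬝ᵥ (Cm F N m *ᵥ b) := by rw [hCb, ← hu]
  have hJb : a ⬝ᵥ (Jm m *ᵥ b) = ((Jm m)ᵀ *ᵥ a) ⬝ᵥ b := by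
    rw [dotProduct_comm, dotT, dotProduct_comm]
  have hsum : a ⬝ᵥ a = a 0 * a 0 + ((Jm m)ᵀ *ᵥ a) ⬝ᵥ ((Jm m)ᵀ *ᵥ a) := by
    rw [Jt_mulVec]
    show ∑ i, a i * a i = _
    rw [Fin.sum_univ_succ]
    rfl
  have hW : -(c ^ 2) ≤ a ⬝ᵥ a + b ⬝ᵥ b + 2 * c * (a 0) - 2 * (a ⬝ᵥ (Jm m *ᵥ b)) := by
    set s := (Jm m)ᵀ *ᵥ a with hs
    have h1 : 0 ≤ (b - s) ⬝ᵥ (b - s) := dot_self_nonneg _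
    have h2 : (b - s) ⬝ᵥ (b - s) = b ⬝ᵥ b - 2 * (s ⬝ᵥ b) + s ⬝ᵥ s := by
      simp only [sub_dotProduct, dotProduct_sub]
      rw [dotProduct_comm s b]; ring
    have h12 : 0 ≤ b ⬝ᵥ b - 2 * (s ⬝ᵥ b) + s ⬝ᵥ s := h2 ▸ h1
    have h3 : 0 ≤ (a 0 + c) ^ 2 := sq_nonneg _
    rw [hJb, hsum]
    nlinarith [h12, h3]
  have hkey : Mform r H F N (Pm r F N (m+1) ε) (Pm r F N m ε) v c
      = α ⬝ᵥ Tm r (m+1) *ᵥ α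
        + ε * (a ⬝ᵥ a + b ⬝ᵥ b + 2 * c * (a 0) - 2 * (a ⬝ᵥ (Jm m *ᵥ b))) := by
    rw [expand, e1, e2, e2', e3, e4, e5, e5', e6, e6']
    unfold Mform
    rw [hPu, hsplitu, dotProduct_comm v (Nv N)]
    ring
  rw [hkey]
  have hfin := mul_le_mul_of_nonneg_left hW hε.le
  nlinarith [hTpos, hfin]

end Master
section Mono

variable {n : ℕ} {r : ℕ → ℝ} {H : Matrix (Fin 1) (Fin n) ℝ}
  {F : Matrix (Fin n) (Fin n) ℝ} {N : Matrix (Fin n) (Fin 1) ℝ}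

lemma psd_quad {k : Type*} [Fintype k] {M : Matrix k k ℝ} (h : M.PosSemidef)
    (x : k → ℝ) : 0 ≤ x ⬝ᵥ M *ᵥ x := by simpa using h.dotProduct_mulVec_nonneg x

/-- embedding of the first `m` coordinates -/
def Km (m : ℕ) : Matrix (Fin (m+1)) (Fin m) ℝ :=
  Matrix.of fun i j => if i = j.castSucc then 1 else 0

lemma CmK {m : ℕ} : Cm F N (m+1) * Km m = Cm F N m := by
  ext i j
  simp only [Matrix.mul_apply, Km, Cm, Matrix.of_apply, mul_ite, mul_one, mul_zero,
    Finset.sum_ite_eq', Finset.mem_univ, if_true, Fin.coe_castSucc]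

lemma KtAK {m : ℕ} {ε : ℝ} : (Km m)ᵀ * Am r (m+1) ε * Km m = Am r m ε := by
  ext j j'
  simp only [Matrix.mul_apply, Km, Am, Tm, Matrix.transpose_apply, Matrix.of_apply,
    Matrix.add_apply, Matrix.smul_apply, Matrix.one_apply, ite_mul, one_mul, zero_mul,
    mul_ite, mul_one, mul_zero, Finset.sum_ite_eq, Finset.sum_ite_eq',
    Finset.mem_univ, if_true, smul_eq_mul]
  have h1 : ((j.castSucc : ℤ) - (j'.castSucc : ℤ)).natAbs = ((j : ℤ) - (j' : ℤ)).natAbs := by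
    simp only [Fin.coe_castSucc]
  rw [h1]
  simp only [Fin.castSucc_inj]

lemma Pmono_m (hcov : IsCovarianceSeries r) (m : ℕ) {ε : ℝ} (hε : 0 < ε)
    (x : Fin n → ℝ) :
    x ⬝ᵥ Pm r F N m ε *ᵥ x ≤ x ⬝ᵥ Pm r F N (m+1) ε *ᵥ x := by
  classical
  set q : Fin m → ℝ := (Am r m ε)⁻¹ *ᵥ ((Cm F N m)ᵀ *ᵥ x) with hq
  set c1 : Fin (m+1) → ℝ := (Cm F N (m+1))ᵀ *ᵥ x with hc1
  set y : Fin (m+1) → ℝ := (Am r (m+1) ε)⁻¹ *ᵥ c1 with hy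
  set bb : Fin (m+1) → ℝ := Km m *ᵥ q with hbb
  have h0 : 0 ≤ (bb - y) ⬝ᵥ Am r (m+1) ε *ᵥ (bb - y) :=
    psd_quad (Am_posDef hcov (m+1) hε).posSemidef _
  have hA1y : Am r (m+1) ε *ᵥ y = c1 := A_mulVec_Ainv hcov (m+1) hε c1
  have hKc1 : (Km m)ᵀ *ᵥ c1 = (Cm F N m)ᵀ *ᵥ x := by
    rw [hc1, Matrix.mulVec_mulVec, ← Matrix.transpose_mul, CmK]
  have hCq : Cm F N m *ᵥ q = Pm r F N m ε *ᵥ x := by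
    rw [hq, Matrix.mulVec_mulVec, Matrix.mulVec_mulVec]
    rfl
  have hbc1 : bb ⬝ᵥ c1 = x ⬝ᵥ Pm r F N m ε *ᵥ x := by
    rw [hbb, dotT, hKc1, ← dotT, hCq, dotProduct_comm]
  have hbA1b : bb ⬝ᵥ Am r (m+1) ε *ᵥ bb = x ⬝ᵥ Pm r F N m ε *ᵥ x := by
    rw [hbb, dotT, Matrix.mulVec_mulVec, Matrix.mulVec_mulVec, KtAK,
      A_mulVec_Ainv hcov m hε, ← dotT, hCq, dotProduct_comm]
  have hyA1y : y ⬝ᵥ Am r (m+1) ε *ᵥ y = x ⬝ᵥ Pm r F N (m+1) ε *ᵥ x := by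
    rw [hA1y, hc1, ← dotT]
    have : Cm F N (m+1) *ᵥ y = Pm r F N (m+1) ε *ᵥ x := by
      rw [hy, hc1, Matrix.mulVec_mulVec, Matrix.mulVec_mulVec]
      rfl
    rw [this, dotProduct_comm]
  have hbA1y : bb ⬝ᵥ Am r (m+1) ε *ᵥ y = x ⬝ᵥ Pm r F N m ε *ᵥ x := by
    rw [hA1y, hbc1]
  have hyA1b : y ⬝ᵥ Am r (m+1) ε *ᵥ bb = x ⬝ᵥ Pm r F N m ε *ᵥ x := by
    rw [dot_sym (Am_transpose (m+1) ε), hbA1y]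
  have hexp : (bb - y) ⬝ᵥ Am r (m+1) ε *ᵥ (bb - y)
      = bb ⬝ᵥ Am r (m+1) ε *ᵥ bb - bb ⬝ᵥ Am r (m+1) ε *ᵥ y
        - y ⬝ᵥ Am r (m+1) ε *ᵥ bb + y ⬝ᵥ Am r (m+1) ε *ᵥ y := by
    simp only [Matrix.mulVec_sub, dotProduct_sub, sub_dotProduct]
    ring
  rw [hexp, hbA1b, hbA1y, hyA1b, hyA1y] at h0
  linarith

lemma inv_comm {k : ℕ} {A B : Matrix (Fin k) (Fin k) ℝ} (hA : IsUnit A.det)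
    (h : A * B = B * A) : A⁻¹ * B = B * A⁻¹ := by
  have h1 : A⁻¹ * (B * A) * A⁻¹ = A⁻¹ * (A * B) * A⁻¹ := by rw [h]
  calc A⁻¹ * B = A⁻¹ * B * (A * A⁻¹) := by
        rw [Matrix.mul_nonsing_inv _ hA, Matrix.mul_one]
    _ = A⁻¹ * (B * A) * A⁻¹ := by simp only [Matrix.mul_assoc]
    _ = A⁻¹ * (A * B) * A⁻¹ := h1
    _ = (A⁻¹ * A) * (B * A⁻¹) := by simp only [Matrix.mul_assoc]
    _ = B * A⁻¹ := by rw [Matrix.nonsing_inv_mul _ hA, Matrix.one_mul]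

lemma Am_mul_comm (m : ℕ) (ε δ : ℝ) : Am r m ε * Am r m δ = Am r m δ * Am r m ε := by
  unfold Am
  simp only [Matrix.mul_add, Matrix.add_mul, Matrix.smul_mul, Matrix.mul_smul,
    Matrix.mul_one, Matrix.one_mul, smul_smul, smul_add]
  rw [mul_comm δ ε]
  abel

lemma AmAm_psd (hcov : IsCovarianceSeries r) (m : ℕ) {ε δ : ℝ} (hε : 0 < ε)
    (hδ : 0 < δ) : (Am r m ε * Am r m δ).PosSemidef := by
  have hprod : Am r m ε * Am r m δ
      = Tm r m * Tm r m + (ε + δ) • Tm r m + (ε * δ) • (1 : Matrix (Fin m) (Fin m) ℝ) := by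
    unfold Am
    simp only [Matrix.mul_add, Matrix.add_mul, Matrix.smul_mul, Matrix.mul_smul,
      Matrix.mul_one, Matrix.one_mul, smul_smul, add_smul, smul_add]
    rw [mul_comm δ ε]
    abel
  rw [hprod]
  have hTT : (Tm r m * Tm r m).PosSemidef := by
    have := Matrix.posSemidef_conjTranspose_mul_self (Tm r m)
    rwa [real_conjTranspose, Tm_transpose] at this
  exact (hTT.add (psd_smul (Tm_psd hcov m) (by positivity))).add
    (psd_smul Matrix.PosSemidef.one (by positivity))

lemma Pmono_eps (hcov : IsCovarianceSeries r) (m : ℕ) {δ ε : ℝ} (hδ : 0 < δ)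
    (hde : δ ≤ ε) (x : Fin n → ℝ) :
    x ⬝ᵥ Pm r F N m ε *ᵥ x ≤ x ⬝ᵥ Pm r F N m δ *ᵥ x := by
  classical
  have hε : 0 < ε := lt_of_lt_of_le hδ hde
  have hdetA := Am_isUnit_det hcov m hε
  have hdetB := Am_isUnit_det hcov m hδ
  set A := Am r m ε with hA
  set B := Am r m δ with hB
  have hAmB : A - B = (ε - δ) • (1 : Matrix (Fin m) (Fin m) ℝ) := by
    rw [hA, hB]
    unfold Am
    rw [sub_smul]
    abel
  have hdiffinv : B⁻¹ - A⁻¹ = (ε - δ) • (B⁻¹ * A⁻¹) := by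
    have key : B⁻¹ * (A - B) * A⁻¹ = B⁻¹ - A⁻¹ := by
      rw [Matrix.mul_sub, Matrix.sub_mul, Matrix.nonsing_inv_mul _ hdetB,
        Matrix.mul_assoc, Matrix.mul_nonsing_inv _ hdetA, Matrix.mul_one,
        Matrix.one_mul]
    rw [← key, hAmB, Matrix.mul_smul, Matrix.smul_mul, Matrix.mul_one]
  have hcomm : A * B = B * A := Am_mul_comm m ε δ
  have hAT : Aᵀ = A := by rw [hA]; exact Am_transpose m ε
  have hBT : Bᵀ = B := by rw [hB]; exact Am_transpose m δ
  have hBiAi : (B⁻¹ * A⁻¹)ᵀ = B⁻¹ * A⁻¹ := by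
    rw [Matrix.transpose_mul, Matrix.transpose_nonsing_inv, Matrix.transpose_nonsing_inv,
      hAT, hBT, ← Matrix.mul_inv_rev, ← hcomm, Matrix.mul_inv_rev]
  have hrep : B⁻¹ * A⁻¹ = (B⁻¹ * A⁻¹) * (A * B) * (B⁻¹ * A⁻¹)ᵀ := by
    rw [hBiAi]
    symm
    calc B⁻¹ * A⁻¹ * (A * B) * (B⁻¹ * A⁻¹)
        = B⁻¹ * (A⁻¹ * A) * (B * B⁻¹) * A⁻¹ := by simp only [Matrix.mul_assoc]
      _ = B⁻¹ * A⁻¹ := by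
          rw [Matrix.nonsing_inv_mul _ hdetA, Matrix.mul_nonsing_inv _ hdetB,
            Matrix.mul_one, Matrix.mul_one]
  have hpsd : (Cm F N m * (B⁻¹ * A⁻¹) * (Cm F N m)ᵀ).PosSemidef := by
    rw [hrep]
    have : Cm F N m * ((B⁻¹ * A⁻¹) * (A * B) * (B⁻¹ * A⁻¹)ᵀ) * (Cm F N m)ᵀ
        = (Cm F N m * (B⁻¹ * A⁻¹)) * (A * B) * (Cm F N m * (B⁻¹ * A⁻¹))ᵀ := by
      rw [Matrix.transpose_mul (Cm F N m) (B⁻¹ * A⁻¹), hBiAi]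
      simp only [Matrix.mul_assoc]
    rw [this]
    exact psd_congr (AmAm_psd hcov m hε hδ) _
  have hPdiff : Pm r F N m δ - Pm r F N m ε
      = (ε - δ) • (Cm F N m * (B⁻¹ * A⁻¹) * (Cm F N m)ᵀ) := by
    unfold Pm
    rw [← hA, ← hB, ← Matrix.sub_mul, ← Matrix.mul_sub, hdiffinv,
      Matrix.mul_smul, Matrix.smul_mul]
  have := psd_quad (psd_smul hpsd (by linarith : (0:ℝ) ≤ ε - δ)) x
  rw [← hPdiff] at this
  have hexp : x ⬝ᵥ (Pm r F N m δ - Pm r F N m ε) *ᵥ x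
      = x ⬝ᵥ Pm r F N m δ *ᵥ x - x ⬝ᵥ Pm r F N m ε *ᵥ x := by
    rw [Matrix.sub_mulVec, dotProduct_sub]
  linarith [hexp ▸ this]

end Mono
section Bound

variable {n : ℕ} {r : ℕ → ℝ} {H : Matrix (Fin 1) (Fin n) ℝ}
  {F : Matrix (Fin n) (Fin n) ℝ} {N : Matrix (Fin n) (Fin 1) ℝ}

/-- observability matrix -/
def Ob (H : Matrix (Fin 1) (Fin n) ℝ) (F : Matrix (Fin n) (Fin n) ℝ) :
    Matrix (Fin n) (Fin n) ℝ :=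
  Matrix.of fun i j : Fin n => (H * F ^ (i : ℕ)) 0 j

/-- the uniform bound for the quadratic forms of the `Pm` -/
noncomputable def Bx (r : ℕ → ℝ) (H : Matrix (Fin 1) (Fin n) ℝ)
    (F : Matrix (Fin n) (Fin n) ℝ) (x : Fin n → ℝ) : ℝ :=
  ((Ob H F)ᵀ)⁻¹ *ᵥ x ⬝ᵥ Tm r n *ᵥ (((Ob H F)ᵀ)⁻¹ *ᵥ x)

lemma ObCm (hHFN : ∀ d : ℕ, (H * F ^ d * N) 0 0 = r (d+1)) (m : ℕ)
    (i : Fin n) (j : Fin m) : (Ob H F * Cm F N m) i j = r ((i : ℕ) + (j : ℕ) + 1) := by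
  have h1 : (Ob H F * Cm F N m) i j = ((H * F ^ (i:ℕ)) * (F ^ (j:ℕ) * N)) 0 0 := by
    simp only [Matrix.mul_apply, Ob, Cm, Matrix.of_apply]
  rw [h1, ← Matrix.mul_assoc, Matrix.mul_assoc H, ← pow_add, hHFN]

lemma Pbound (hcov : IsCovarianceSeries r)
    (hHFN : ∀ d : ℕ, (H * F ^ d * N) 0 0 = r (d+1))
    (hO : IsUnit (Ob H F).det) (m : ℕ) {ε : ℝ} (hε : 0 < ε) (x : Fin n → ℝ) :
    x ⬝ᵥ Pm r F N m ε *ᵥ x ≤ Bx r H F x := by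
  classical
  set w : Fin n → ℝ := ((Ob H F)ᵀ)⁻¹ *ᵥ x with hw
  set q : Fin m → ℝ := (Am r m ε)⁻¹ *ᵥ ((Cm F N m)ᵀ *ᵥ x) with hq
  set G : Matrix (Fin n) (Fin m) ℝ := Ob H F * Cm F N m with hG
  -- the big Gram matrix is a submatrix of a bigger Toeplitz matrix
  set σ : Fin n ⊕ Fin m → Fin (m + n) :=
    Sum.elim (fun i => ⟨m + (i : ℕ), by omega⟩)
      (fun j => ⟨m - 1 - (j : ℕ), by have := j.isLt; omega⟩) with hσ
  have hΓ : Matrix.fromBlocks (Tm r n) G Gᵀ (Tm r m) = (Tm r (m + n)).submatrix σ σ := by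
    ext i j
    rcases i with i | i <;> rcases j with j | j <;>
      simp only [Matrix.fromBlocks_apply₁₁, Matrix.fromBlocks_apply₁₂,
        Matrix.fromBlocks_apply₂₁, Matrix.fromBlocks_apply₂₂, Matrix.submatrix_apply,
        hσ, Sum.elim_inl, Sum.elim_inr, Matrix.transpose_apply]
    · show Tm r n i j = _
      simp only [Tm, Matrix.of_apply]
      congr 1
      omega
    · rw [hG, ObCm hHFN]
      show _ = Tm r (m+n) _ _
      simp only [Tm, Matrix.of_apply]
      congr 1
      have := j.isLt
      omega
    · rw [hG, ObCm hHFN]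
      show _ = Tm r (m+n) _ _
      simp only [Tm, Matrix.of_apply]
      congr 1
      have := i.isLt
      omega
    · show Tm r m i j = _
      simp only [Tm, Matrix.of_apply]
      congr 1
      have := i.isLt
      have := j.isLt
      omega
  have hΓpsd : (Matrix.fromBlocks (Tm r n) G Gᵀ (Tm r m)).PosSemidef := by
    rw [hΓ]
    exact (Tm_psd hcov (m + n)).submatrix σ
  have h0 : 0 ≤ (w ⊕ᵥ (-q)) ⬝ᵥ (Matrix.fromBlocks (Tm r n) G Gᵀ (Tm r m)) *ᵥ (w ⊕ᵥ (-q)) :=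
    psd_quad hΓpsd _
  rw [Matrix.fromBlocks_mulVec, sumElim_dotProduct_sumElim] at h0
  have hcompl : (w ⊕ᵥ (-q)) ∘ Sum.inl = w := rfl
  have hcompr : (w ⊕ᵥ (-q)) ∘ Sum.inr = -q := rfl
  rw [hcompl, hcompr] at h0
  -- evaluate the four pieces
  have hdetOT : IsUnit ((Ob H F)ᵀ).det := by rwa [Matrix.det_transpose]
  have hOw : (Ob H F)ᵀ *ᵥ w = x := by
    rw [hw, Matrix.mulVec_mulVec, Matrix.mul_nonsing_inv _ hdetOT, Matrix.one_mulVec]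
  have hCq : Cm F N m *ᵥ q = Pm r F N m ε *ᵥ x := by
    rw [hq, Matrix.mulVec_mulVec, Matrix.mulVec_mulVec]
    rfl
  have hGq : w ⬝ᵥ G *ᵥ (-q) = -(x ⬝ᵥ Pm r F N m ε *ᵥ x) := by
    rw [hG, ← Matrix.mulVec_mulVec, dotProduct_comm, dotT, hOw, Matrix.mulVec_neg,
      neg_dotProduct, hCq, dotProduct_comm]
  have hGtq : (-q) ⬝ᵥ Gᵀ *ᵥ w = -(x ⬝ᵥ Pm r F N m ε *ᵥ x) := by
    rw [hG, Matrix.transpose_mul, ← Matrix.mulVec_mulVec, hOw, neg_dotProduct,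
      ← dotT, hCq, dotProduct_comm]
  have hTq : (-q) ⬝ᵥ Tm r m *ᵥ (-q) = x ⬝ᵥ Pm r F N m ε *ᵥ x - ε * (q ⬝ᵥ q) := by
    rw [Matrix.mulVec_neg, dotProduct_neg, neg_dotProduct, neg_neg]
    have hTmq : Tm r m *ᵥ q = (Cm F N m)ᵀ *ᵥ x - ε • q := by
      rw [hq]; exact T_mulVec_Ainv hcov m hε _
    rw [hTmq, dotProduct_sub, dotProduct_smul, smul_eq_mul, ← dotT, hCq,
      dotProduct_comm]
  -- assemble
  have hq2 : 0 ≤ q ⬝ᵥ q := dot_self_nonneg q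
  have hexp : w ⬝ᵥ (Tm r n *ᵥ w + G *ᵥ (-q)) + (-q) ⬝ᵥ (Gᵀ *ᵥ w + Tm r m *ᵥ (-q))
      = w ⬝ᵥ Tm r n *ᵥ w + w ⬝ᵥ G *ᵥ (-q) + ((-q) ⬝ᵥ Gᵀ *ᵥ w + (-q) ⬝ᵥ Tm r m *ᵥ (-q)) := by
    rw [dotProduct_add, dotProduct_add]
  rw [hexp, hGq, hGtq, hTq] at h0
  have hq3 : 0 ≤ ε * (q ⬝ᵥ q) := mul_nonneg hε.le hq2
  have hfin : x ⬝ᵥ Pm r F N m ε *ᵥ x ≤ w ⬝ᵥ Tm r n *ᵥ w := by linarith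
  have hBx : Bx r H F x = w ⬝ᵥ Tm r n *ᵥ w := by rw [hw]; rfl
  rw [hBx]
  exact hfin

end Bound
section Block

variable {n : ℕ} {r : ℕ → ℝ} {H : Matrix (Fin 1) (Fin n) ℝ}
  {F : Matrix (Fin n) (Fin n) ℝ} {N : Matrix (Fin n) (Fin 1) ℝ} {r0 : ℝ}

lemma dot_sum_split (x z : Fin n ⊕ Fin 1 → ℝ) :
    x ⬝ᵥ z = (x ∘ Sum.inl) ⬝ᵥ (z ∘ Sum.inl) + (x ∘ Sum.inr) ⬝ᵥ (z ∘ Sum.inr) := by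
  simp [dotProduct, Fintype.sum_sum_type]

lemma fin1_dot (p q : Fin 1 → ℝ) : p ⬝ᵥ q = p 0 * q 0 := by
  simp [dotProduct]

lemma Nv_mulVec (cc : Fin 1 → ℝ) : N *ᵥ cc = cc 0 • Nv N := by
  ext i
  simp [Matrix.mulVec, dotProduct, Nv, mul_comm]

lemma Ht_mulVec (cc : Fin 1 → ℝ) : Hᵀ *ᵥ cc = cc 0 • hv H := by
  ext i
  simp [Matrix.mulVec, dotProduct, hv, mul_comm]

/-- quadratic form of the `srBlock` matrix equals `Mform` -/
lemma block_quad (hr0 : r 0 = r0) (P : Matrix (Fin n) (Fin n) ℝ) (hsym : Pᵀ = P)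
    (x : Fin n ⊕ Fin 1 → ℝ) :
    x ⬝ᵥ (srBlock H F N r0 P) *ᵥ x
      = Mform r H F N P P (x ∘ Sum.inl) (x (Sum.inr 0)) := by
  classical
  set v : Fin n → ℝ := x ∘ Sum.inl with hv'
  set cc : Fin 1 → ℝ := x ∘ Sum.inr with hcc
  have hcc0 : cc = fun _ => x (Sum.inr 0) := by
    ext i
    have : i = 0 := Subsingleton.elim _ _
    rw [this]
    rfl
  set c : ℝ := x (Sum.inr 0) with hc
  -- split the quadratic form
  rw [srBlock, Matrix.fromBlocks_mulVec, dot_sum_split]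
  have hl : ((Sum.elim ((P - F * P * Fᵀ) *ᵥ v + (N - F * P * Hᵀ) *ᵥ cc)
      (((N - F * P * Hᵀ)ᵀ) *ᵥ v + (r0 • 1 - H * P * Hᵀ) *ᵥ cc)) ∘ Sum.inl)
      = (P - F * P * Fᵀ) *ᵥ v + (N - F * P * Hᵀ) *ᵥ cc := rfl
  have hr : ((Sum.elim ((P - F * P * Fᵀ) *ᵥ v + (N - F * P * Hᵀ) *ᵥ cc)
      (((N - F * P * Hᵀ)ᵀ) *ᵥ v + (r0 • 1 - H * P * Hᵀ) *ᵥ cc)) ∘ Sum.inr)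
      = ((N - F * P * Hᵀ)ᵀ) *ᵥ v + (r0 • 1 - H * P * Hᵀ) *ᵥ cc := rfl
  rw [hl, hr]
  -- evaluate the four pieces
  have t1 : v ⬝ᵥ ((P - F * P * Fᵀ) *ᵥ v)
      = v ⬝ᵥ P *ᵥ v - (Fᵀ *ᵥ v) ⬝ᵥ P *ᵥ (Fᵀ *ᵥ v) := by
    rw [Matrix.sub_mulVec, dotProduct_sub]
    congr 1
    rw [← Matrix.mulVec_mulVec, ← Matrix.mulVec_mulVec, dotProduct_comm, dotT,
      dotProduct_comm]
  have t2 : v ⬝ᵥ ((N - F * P * Hᵀ) *ᵥ cc)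
      = c * (v ⬝ᵥ Nv N) - c * ((Fᵀ *ᵥ v) ⬝ᵥ P *ᵥ hv H) := by
    rw [Matrix.sub_mulVec, dotProduct_sub, hcc0]
    congr 1
    · rw [show (fun (_ : Fin 1) => c) = cc from hcc0.symm, Nv_mulVec, dotProduct_smul,
        hcc0, smul_eq_mul]
    · rw [show (fun (_ : Fin 1) => c) = cc from hcc0.symm,
        ← Matrix.mulVec_mulVec, ← Matrix.mulVec_mulVec, Ht_mulVec, hcc0]
      rw [Matrix.mulVec_smul, Matrix.mulVec_smul, dotProduct_smul, smul_eq_mul]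
      congr 1
      rw [dotProduct_comm, dotT, dotProduct_comm]
  have FPHt_col : ∀ i, (F * P * Hᵀ) i 0 = (F *ᵥ (P *ᵥ hv H)) i := by
    intro i
    simp only [Matrix.mul_apply, Matrix.mulVec, dotProduct, hv, Matrix.transpose_apply,
      Finset.sum_mul, Finset.mul_sum, mul_assoc]
    rw [Finset.sum_comm]
  have t3 : cc ⬝ᵥ (((N - F * P * Hᵀ)ᵀ) *ᵥ v)
      = c * (v ⬝ᵥ Nv N) - c * ((Fᵀ *ᵥ v) ⬝ᵥ P *ᵥ hv H) := by
    rw [fin1_dot]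
    have h0 : ((N - F * P * Hᵀ)ᵀ *ᵥ v) 0
        = Nv N ⬝ᵥ v - (F *ᵥ (P *ᵥ hv H)) ⬝ᵥ v := by
      simp only [Matrix.mulVec, dotProduct, Matrix.transpose_apply, Matrix.sub_apply,
        sub_mul, Finset.sum_sub_distrib]
      congr 1
      refine Finset.sum_congr rfl fun i _ => ?_
      rw [FPHt_col]
      rfl
    rw [h0]
    have h1 : (F *ᵥ (P *ᵥ hv H)) ⬝ᵥ v = (Fᵀ *ᵥ v) ⬝ᵥ P *ᵥ hv H := by
      rw [dotT, dotProduct_comm]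
    have h2 : Nv N ⬝ᵥ v = v ⬝ᵥ Nv N := dotProduct_comm _ _
    have h3 : cc 0 = c := by rw [hcc0]
    rw [h1, h2, h3]
    ring
  have HPHt00 : (H * P * Hᵀ) 0 0 = hv H ⬝ᵥ P *ᵥ hv H := by
    simp only [Matrix.mul_apply, Matrix.mulVec, dotProduct, hv, Matrix.transpose_apply,
      Finset.sum_mul, Finset.mul_sum, mul_assoc]
    rw [Finset.sum_comm]
  have t4 : cc ⬝ᵥ ((r0 • (1 : Matrix (Fin 1) (Fin 1) ℝ) - H * P * Hᵀ) *ᵥ cc)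
      = c ^ 2 * (r0 - hv H ⬝ᵥ P *ᵥ hv H) := by
    rw [fin1_dot]
    have h0 : ((r0 • (1 : Matrix (Fin 1) (Fin 1) ℝ) - H * P * Hᵀ) *ᵥ cc) 0
        = (r0 - (H * P * Hᵀ) 0 0) * cc 0 := by
      simp [Matrix.mulVec, dotProduct, Matrix.sub_apply, Matrix.smul_apply,
        Matrix.one_apply, sub_mul]
    have h3 : cc 0 = c := by rw [hcc0]
    rw [h0, HPHt00, h3]
    ring
  rw [dotProduct_add, dotProduct_add, t1, t2, t3, t4]
  unfold Mform
  have hexp : (Fᵀ *ᵥ v + c • hv H) ⬝ᵥ P *ᵥ (Fᵀ *ᵥ v + c • hv H)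
      = (Fᵀ *ᵥ v) ⬝ᵥ P *ᵥ (Fᵀ *ᵥ v) + 2 * c * ((Fᵀ *ᵥ v) ⬝ᵥ P *ᵥ hv H)
        + c ^ 2 * (hv H ⬝ᵥ P *ᵥ hv H) := by
    rw [Matrix.mulVec_add, Matrix.mulVec_smul, dotProduct_add, add_dotProduct,
      add_dotProduct, dotProduct_smul, smul_dotProduct, smul_dotProduct,
      dotProduct_smul, dot_sym hsym (hv H) (Fᵀ *ᵥ v)]
    simp only [smul_eq_mul]
    ring
  rw [hexp, ← hr0]
  ring

end Block
section Limits

variable {n : ℕ} {r : ℕ → ℝ} {H : Matrix (Fin 1) (Fin n) ℝ}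
  {F : Matrix (Fin n) (Fin n) ℝ} {N : Matrix (Fin n) (Fin 1) ℝ}

/-- supremum over the past horizon of the quadratic forms -/
noncomputable def Qs (r : ℕ → ℝ) (H : Matrix (Fin 1) (Fin n) ℝ)
    (F : Matrix (Fin n) (Fin n) ℝ) (N : Matrix (Fin n) (Fin 1) ℝ)
    (ε : ℝ) (x : Fin n → ℝ) : ℝ :=
  ⨆ m : ℕ, x ⬝ᵥ Pm r F N m ε *ᵥ x

/-- limit matrix for fixed `ε` (via polarization) -/
noncomputable def Pinf (r : ℕ → ℝ) (H : Matrix (Fin 1) (Fin n) ℝ)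
    (F : Matrix (Fin n) (Fin n) ℝ) (N : Matrix (Fin n) (Fin 1) ℝ)
    (ε : ℝ) : Matrix (Fin n) (Fin n) ℝ :=
  Matrix.of fun i j =>
    (Qs r H F N ε (Pi.single i 1 + Pi.single j 1) - Qs r H F N ε (Pi.single i 1)
      - Qs r H F N ε (Pi.single j 1)) / 2

/-- final limit matrix, `ε = (1/2)^k → 0` -/
noncomputable def Pfin (r : ℕ → ℝ) (H : Matrix (Fin 1) (Fin n) ℝ)
    (F : Matrix (Fin n) (Fin n) ℝ) (N : Matrix (Fin n) (Fin 1) ℝ) :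
    Matrix (Fin n) (Fin n) ℝ :=
  Matrix.of fun i j =>
    ((⨆ k : ℕ, Qs r H F N ((1/2) ^ k) (Pi.single i 1 + Pi.single j 1))
      - (⨆ k : ℕ, Qs r H F N ((1/2) ^ k) (Pi.single i 1))
      - (⨆ k : ℕ, Qs r H F N ((1/2) ^ k) (Pi.single j 1))) / 2

variable (hcov : IsCovarianceSeries r)
  (hHFN : ∀ d : ℕ, (H * F ^ d * N) 0 0 = r (d+1))
  (hO : IsUnit (Ob H F).det)

include hcov hHFN hO

lemma q_bddAbove {ε : ℝ} (hε : 0 < ε) (x : Fin n → ℝ) :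
    BddAbove (Set.range fun m : ℕ => x ⬝ᵥ Pm r F N m ε *ᵥ x) := by
  refine ⟨Bx r H F x, ?_⟩
  rintro _ ⟨m, rfl⟩
  exact Pbound hcov hHFN hO m hε x

lemma q_tendsto {ε : ℝ} (hε : 0 < ε) (x : Fin n → ℝ) :
    Filter.Tendsto (fun m : ℕ => x ⬝ᵥ Pm r F N m ε *ᵥ x) Filter.atTop
      (nhds (Qs r H F N ε x)) :=
  tendsto_atTop_ciSup (monotone_nat_of_le_succ fun m => Pmono_m hcov m hε x)
    (q_bddAbove hcov hHFN hO hε x)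

lemma Qs_nonneg {ε : ℝ} (hε : 0 < ε) (x : Fin n → ℝ) : 0 ≤ Qs r H F N ε x :=
  ge_of_tendsto' (q_tendsto hcov hHFN hO hε x)
    (fun m => psd_quad (Pm_psd hcov m hε) x)

lemma Qs_le_Bx {ε : ℝ} (hε : 0 < ε) (x : Fin n → ℝ) : Qs r H F N ε x ≤ Bx r H F x :=
  ciSup_le fun m => Pbound hcov hHFN hO m hε x

lemma Qs_mono {δ ε : ℝ} (hδ : 0 < δ) (hde : δ ≤ ε) (x : Fin n → ℝ) :
    Qs r H F N ε x ≤ Qs r H F N δ x :=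
  ciSup_mono (q_bddAbove hcov hHFN hO hδ x) fun m => Pmono_eps hcov m hδ hde x

lemma Pm_entry_eq {ε : ℝ} (hε : 0 < ε) (m : ℕ) (i j : Fin n) :
    Pm r F N m ε i j
      = ((Pi.single i 1 + Pi.single j 1) ⬝ᵥ Pm r F N m ε *ᵥ (Pi.single i 1 + Pi.single j 1)
        - Pi.single i 1 ⬝ᵥ Pm r F N m ε *ᵥ Pi.single i 1
        - Pi.single j 1 ⬝ᵥ Pm r F N m ε *ᵥ Pi.single j 1) / 2 := by
  have hds : ∀ (a b : Fin n), Pi.single a 1 ⬝ᵥ Pm r F N m ε *ᵥ Pi.single b 1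
      = Pm r F N m ε a b := by
    intro a b
    rw [Matrix.mulVec_single]
    simp [single_dotProduct]
  have hsym : Pm r F N m ε j i = Pm r F N m ε i j := by
    conv_lhs => rw [← Pm_transpose hcov m hε]
    rfl
  rw [Matrix.mulVec_add, dotProduct_add, add_dotProduct, add_dotProduct,
    hds, hds, hds, hds, hsym]
  ring

lemma Pinf_entry_tendsto {ε : ℝ} (hε : 0 < ε) (i j : Fin n) :
    Filter.Tendsto (fun m : ℕ => Pm r F N m ε i j) Filter.atTop
      (nhds (Pinf r H F N ε i j)) := by
  have h1 := q_tendsto hcov hHFN hO hε (Pi.single i 1 + Pi.single j 1)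
  have h2 := q_tendsto hcov hHFN hO hε (Pi.single i 1)
  have h3 := q_tendsto hcov hHFN hO hε (Pi.single j 1)
  have h := ((h1.sub h2).sub h3).div_const 2
  refine h.congr fun m => ?_
  rw [← Pm_entry_eq hcov hHFN hO hε]

omit hcov hHFN hO in
lemma tendsto_quadform {Ms : ℕ → Matrix (Fin n) (Fin n) ℝ} {M : Matrix (Fin n) (Fin n) ℝ}
    (h : ∀ i j, Filter.Tendsto (fun t => Ms t i j) Filter.atTop (nhds (M i j)))
    (x y : Fin n → ℝ) :
    Filter.Tendsto (fun t => x ⬝ᵥ Ms t *ᵥ y) Filter.atTop (nhds (x ⬝ᵥ M *ᵥ y)) := by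
  have hrep : ∀ (M' : Matrix (Fin n) (Fin n) ℝ),
      x ⬝ᵥ M' *ᵥ y = ∑ i : Fin n, ∑ j : Fin n, x i * (M' i j * y j) := by
    intro M'
    simp [dotProduct, Matrix.mulVec, Finset.mul_sum]
  simp only [hrep]
  exact tendsto_finset_sum _ fun i _ => tendsto_finset_sum _ fun j _ =>
    (((h i j).mul_const (y j)).const_mul (x i))

lemma quad_Pinf_eq_Qs {ε : ℝ} (hε : 0 < ε) (x : Fin n → ℝ) :
    x ⬝ᵥ Pinf r H F N ε *ᵥ x = Qs r H F N ε x :=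
  tendsto_nhds_unique
    (tendsto_quadform (fun i j => Pinf_entry_tendsto hcov hHFN hO hε i j) x x)
    (q_tendsto hcov hHFN hO hε x)

lemma master_inf {ε : ℝ} (hε : 0 < ε) (v : Fin n → ℝ) (c : ℝ) :
    -(ε * c ^ 2) ≤ Mform r H F N (Pinf r H F N ε) (Pinf r H F N ε) v c := by
  set u : Fin n → ℝ := Fᵀ *ᵥ v + c • hv H with hu
  have h1 : Filter.Tendsto (fun m : ℕ => v ⬝ᵥ Pm r F N (m + 1) ε *ᵥ v) Filter.atTop
      (nhds (v ⬝ᵥ Pinf r H F N ε *ᵥ v)) :=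
    (Filter.tendsto_add_atTop_iff_nat 1).2
      (tendsto_quadform (fun i j => Pinf_entry_tendsto hcov hHFN hO hε i j) v v)
  have h2 : Filter.Tendsto (fun m : ℕ => u ⬝ᵥ Pm r F N m ε *ᵥ u) Filter.atTop
      (nhds (u ⬝ᵥ Pinf r H F N ε *ᵥ u)) :=
    tendsto_quadform (fun i j => Pinf_entry_tendsto hcov hHFN hO hε i j) u u
  have hM : Filter.Tendsto
      (fun m : ℕ => Mform r H F N (Pm r F N (m+1) ε) (Pm r F N m ε) v c) Filter.atTop
      (nhds (Mform r H F N (Pinf r H F N ε) (Pinf r H F N ε) v c)) := by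
    unfold Mform
    rw [← hu]
    exact ((h1.add_const _).add_const _).sub h2
  exact ge_of_tendsto' hM fun m => master hcov hHFN m hε v c

end Limits
section Hard

variable {n : ℕ} {r : ℕ → ℝ} {H : Matrix (Fin 1) (Fin n) ℝ}
  {F : Matrix (Fin n) (Fin n) ℝ} {N : Matrix (Fin n) (Fin 1) ℝ} {r0 : ℝ}

lemma srBlock_herm (P : Matrix (Fin n) (Fin n) ℝ) (hsym : Pᵀ = P) :
    (srBlock H F N r0 P).IsHermitian := by
  show _ = _
  rw [real_conjTranspose]
  unfold srBlock
  rw [Matrix.fromBlocks_transpose]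
  have hQ : (P - F * P * Fᵀ)ᵀ = P - F * P * Fᵀ := by
    rw [Matrix.transpose_sub, hsym, Matrix.transpose_mul, Matrix.transpose_mul,
      Matrix.transpose_transpose, hsym, ← Matrix.mul_assoc]
  have hR : (r0 • (1 : Matrix (Fin 1) (Fin 1) ℝ) - H * P * Hᵀ)ᵀ
      = r0 • (1 : Matrix (Fin 1) (Fin 1) ℝ) - H * P * Hᵀ := by
    rw [Matrix.transpose_sub, Matrix.transpose_smul, Matrix.transpose_one,
      Matrix.transpose_mul, Matrix.transpose_mul, Matrix.transpose_transpose,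
      hsym, ← Matrix.mul_assoc]
  rw [hQ, hR, Matrix.transpose_transpose]

variable (hcov : IsCovarianceSeries r)
  (hHFN : ∀ d : ℕ, (H * F ^ d * N) 0 0 = r (d+1))
  (hO : IsUnit (Ob H F).det)

include hcov hHFN hO

lemma eps_pos (k : ℕ) : (0:ℝ) < (1/2) ^ k := by positivity

lemma QQ_tendsto (x : Fin n → ℝ) :
    Filter.Tendsto (fun k : ℕ => Qs r H F N ((1/2) ^ k) x) Filter.atTop
      (nhds (⨆ k : ℕ, Qs r H F N ((1/2) ^ k) x)) := by
  refine tendsto_atTop_ciSup (monotone_nat_of_le_succ fun k => ?_) ?_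
  · refine Qs_mono hcov hHFN hO (by positivity) ?_ x
    rw [pow_succ]
    nlinarith [eps_pos hcov hHFN hO k]
  · refine ⟨Bx r H F x, ?_⟩
    rintro _ ⟨k, rfl⟩
    exact Qs_le_Bx hcov hHFN hO (by positivity) x

lemma Pfin_entry_tendsto (i j : Fin n) :
    Filter.Tendsto (fun k : ℕ => Pinf r H F N ((1/2) ^ k) i j) Filter.atTop
      (nhds (Pfin r H F N i j)) := by
  have h1 := QQ_tendsto hcov hHFN hO (Pi.single i 1 + Pi.single j 1)
  have h2 := QQ_tendsto hcov hHFN hO (Pi.single i 1)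
  have h3 := QQ_tendsto hcov hHFN hO (Pi.single j 1)
  exact ((h1.sub h2).sub h3).div_const 2

lemma quad_Pfin (x : Fin n → ℝ) :
    x ⬝ᵥ Pfin r H F N *ᵥ x = ⨆ k : ℕ, Qs r H F N ((1/2) ^ k) x := by
  refine tendsto_nhds_unique
    (tendsto_quadform (fun i j => Pfin_entry_tendsto hcov hHFN hO i j) x x) ?_
  have heq : (fun k : ℕ => x ⬝ᵥ Pinf r H F N ((1/2) ^ k) *ᵥ x)
      = fun k : ℕ => Qs r H F N ((1/2) ^ k) x := by
    funext k
    exact quad_Pinf_eq_Qs hcov hHFN hO (eps_pos hcov hHFN hO k) x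
  rw [heq]
  exact QQ_tendsto hcov hHFN hO x

omit hcov hHFN hO in
lemma Pfin_sym : (Pfin r H F N)ᵀ = Pfin r H F N := by
  ext i j
  show Pfin r H F N j i = Pfin r H F N i j
  unfold Pfin
  simp only [Matrix.of_apply]
  rw [add_comm (Pi.single j 1)]
  ring

lemma Pfin_psd : (Pfin r H F N).PosSemidef := by
  refine Matrix.PosSemidef.of_dotProduct_mulVec_nonneg ?_ ?_
  · show _ = _
    rw [real_conjTranspose]
    exact Pfin_sym
  · intro x
    have hx : star x = x := by simp
    rw [hx, quad_Pfin hcov hHFN hO]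
    refine ge_of_tendsto' (QQ_tendsto hcov hHFN hO x) fun k => ?_
    exact Qs_nonneg hcov hHFN hO (eps_pos hcov hHFN hO k) x

lemma Mform_Pfin_nonneg (v : Fin n → ℝ) (c : ℝ) :
    0 ≤ Mform r H F N (Pfin r H F N) (Pfin r H F N) v c := by
  set u : Fin n → ℝ := Fᵀ *ᵥ v + c • hv H with hu
  have hL : Filter.Tendsto (fun k : ℕ => -((1/2:ℝ) ^ k * c ^ 2)) Filter.atTop (nhds 0) := by
    have := (tendsto_pow_atTop_nhds_zero_of_lt_one (by norm_num : (0:ℝ) ≤ 1/2)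
      (by norm_num : (1/2:ℝ) < 1)).mul_const (c ^ 2)
    have h0 := this.neg
    simpa using h0
  have hR : Filter.Tendsto
      (fun k : ℕ => Mform r H F N (Pinf r H F N ((1/2) ^ k)) (Pinf r H F N ((1/2) ^ k)) v c)
      Filter.atTop (nhds (Mform r H F N (Pfin r H F N) (Pfin r H F N) v c)) := by
    unfold Mform
    rw [← hu]
    have h1 := tendsto_quadform (fun i j => Pfin_entry_tendsto hcov hHFN hO i j) v v
    have h2 := tendsto_quadform (fun i j => Pfin_entry_tendsto hcov hHFN hO i j) u u
    exact ((h1.add_const _).add_const _).sub h2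
  refine le_of_tendsto_of_tendsto' hL hR fun k => ?_
  exact master_inf hcov hHFN hO (eps_pos hcov hHFN hO k) v c

lemma hard_dir (hr0 : r 0 = r0) : (srSolSet H F N r0).Nonempty := by
  refine ⟨Pfin r H F N, Pfin_psd hcov hHFN hO, ?_⟩
  refine Matrix.PosSemidef.of_dotProduct_mulVec_nonneg ?_ ?_
  · exact srBlock_herm _ Pfin_sym
  · intro x
    have hx : star x = x := by simp
    rw [hx, block_quad hr0 (Pfin r H F N) Pfin_sym x]
    exact Mform_Pfin_nonneg hcov hHFN hO _ _

end Hard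
section Easy

variable {n : ℕ} {r : ℕ → ℝ} {H : Matrix (Fin 1) (Fin n) ℝ}
  {F : Matrix (Fin n) (Fin n) ℝ} {N : Matrix (Fin n) (Fin 1) ℝ} {r0 : ℝ}

lemma pow_mulVec_hv_dot_Nv (hHFN : ∀ d : ℕ, (H * F ^ d * N) 0 0 = r (d+1)) (d : ℕ) :
    ((Fᵀ) ^ d *ᵥ hv H) ⬝ᵥ Nv N = r (d+1) := by
  rw [dotT]
  have h1 : ((Fᵀ) ^ d)ᵀ = F ^ d := by
    rw [← Matrix.transpose_pow, Matrix.transpose_transpose]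
  rw [h1, ← hHFN d]
  simp only [Matrix.mul_apply, Matrix.mulVec, dotProduct, hv, Nv, Finset.sum_mul,
    Finset.mul_sum, mul_assoc]
  rw [Finset.sum_comm]

/-- the double-sum form of the Toeplitz quadratic form -/
lemma toeplitz_sum (M : ℕ) (x : ℕ → ℝ) :
    ∑ i ∈ Finset.range M, ∑ j ∈ Finset.range M, x i * x j * r ((i:ℤ) - (j:ℤ)).natAbs
      = ∑ k ∈ Finset.range M,
          (r 0 * x k ^ 2 + 2 * x k * ∑ i ∈ Finset.Ico (k+1) M, x i * r (i - k)) := by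
  classical
  -- swap identity
  have hswap : ∑ i ∈ Finset.range M, ∑ j ∈ Finset.Ico (i+1) M, x i * x j * r (j - i)
      = ∑ j ∈ Finset.range M, ∑ i ∈ Finset.range j, x i * x j * r (j - i) := by
    have hcomm := Finset.sum_Ico_Ico_comm 0 M (fun i j => x i * x j * r (j - i))
    have hL : ∑ i ∈ Finset.Ico 0 M, ∑ j ∈ Finset.Ico i M, x i * x j * r (j - i)
        = ∑ i ∈ Finset.range M, (x i * x i * r 0
            + ∑ j ∈ Finset.Ico (i+1) M, x i * x j * r (j - i)) := by
      rw [← Finset.range_eq_Ico]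
      refine Finset.sum_congr rfl fun i hi => ?_
      rw [Finset.mem_range] at hi
      rw [Finset.sum_eq_sum_Ico_succ_bot hi]
      simp
    have hR : ∑ j ∈ Finset.Ico 0 M, ∑ i ∈ Finset.Ico 0 (j+1), x i * x j * r (j - i)
        = ∑ j ∈ Finset.range M, ((∑ i ∈ Finset.range j, x i * x j * r (j - i))
            + x j * x j * r 0) := by
      rw [← Finset.range_eq_Ico]
      refine Finset.sum_congr rfl fun j _ => ?_
      rw [← Finset.range_eq_Ico, Finset.sum_range_succ]
      simp
    rw [hL, hR] at hcomm
    rw [Finset.sum_add_distrib] at hcomm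
    rw [Finset.sum_add_distrib] at hcomm
    have hdiag : ∑ i ∈ Finset.range M, x i * x i * r 0
        = ∑ j ∈ Finset.range M, x j * x j * r 0 := rfl
    linarith [hcomm]
  -- main computation
  have hmain : ∀ i ∈ Finset.range M,
      ∑ j ∈ Finset.range M, x i * x j * r ((i:ℤ) - (j:ℤ)).natAbs
        = (∑ j ∈ Finset.range i, x i * x j * r (i - j)) + x i * x i * r 0
          + ∑ j ∈ Finset.Ico (i+1) M, x i * x j * r (j - i) := by
    intro i hi
    rw [Finset.mem_range] at hi
    have hsplit1 : ∑ j ∈ Finset.range M, x i * x j * r ((i:ℤ) - (j:ℤ)).natAbs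
        = (∑ j ∈ Finset.Ico 0 i, x i * x j * r ((i:ℤ) - (j:ℤ)).natAbs)
          + ∑ j ∈ Finset.Ico i M, x i * x j * r ((i:ℤ) - (j:ℤ)).natAbs := by
      rw [Finset.sum_Ico_consecutive _ (Nat.zero_le i) (le_of_lt hi),
        ← Finset.range_eq_Ico]
    rw [hsplit1, Finset.sum_eq_sum_Ico_succ_bot hi]
    have e1 : ∑ j ∈ Finset.Ico 0 i, x i * x j * r ((i:ℤ) - (j:ℤ)).natAbs
        = ∑ j ∈ Finset.range i, x i * x j * r (i - j) := by
      rw [← Finset.range_eq_Ico]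
      refine Finset.sum_congr rfl fun j hj => ?_
      rw [Finset.mem_range] at hj
      congr 2
      omega
    have e2 : x i * x i * r ((i:ℤ) - (i:ℤ)).natAbs = x i * x i * r 0 := by
      congr 2
      omega
    have e3 : ∑ j ∈ Finset.Ico (i+1) M, x i * x j * r ((i:ℤ) - (j:ℤ)).natAbs
        = ∑ j ∈ Finset.Ico (i+1) M, x i * x j * r (j - i) := by
      refine Finset.sum_congr rfl fun j hj => ?_
      rw [Finset.mem_Ico] at hj
      congr 2
      omega
    rw [e1, e2, e3]
    ring
  rw [Finset.sum_congr rfl hmain]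
  rw [Finset.sum_add_distrib, Finset.sum_add_distrib]
  have hlow : ∑ i ∈ Finset.range M, ∑ j ∈ Finset.range i, x i * x j * r (i - j)
      = ∑ i ∈ Finset.range M, ∑ j ∈ Finset.Ico (i+1) M, x i * x j * r (j - i) := by
    rw [hswap]
    refine Finset.sum_congr rfl fun j _ => Finset.sum_congr rfl fun i _ => by ring
  rw [hlow, ← Finset.sum_add_distrib, ← Finset.sum_add_distrib]
  refine Finset.sum_congr rfl fun k _ => ?_
  have hrw : 2 * x k * ∑ i ∈ Finset.Ico (k+1) M, x i * r (i - k)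
      = ∑ i ∈ Finset.Ico (k+1) M, (x k * x i * r (i - k) + x k * x i * r (i - k)) := by
    rw [Finset.mul_sum]
    refine Finset.sum_congr rfl fun i _ => by ring
  rw [hrw, Finset.sum_add_distrib]
  ring

lemma easy_dir (hr0 : r 0 = r0)
    (hHFN : ∀ d : ℕ, (H * F ^ d * N) 0 0 = r (d+1))
    {P : Matrix (Fin n) (Fin n) ℝ} (hP : P ∈ srSolSet H F N r0) :
    IsCovarianceSeries r := by
  obtain ⟨hPpsd, hBpsd⟩ := hP
  have hsymP : Pᵀ = P := by
    have h2 : Pᴴ = P := hPpsd.1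
    rwa [real_conjTranspose] at h2
  intro m
  refine Matrix.PosSemidef.of_dotProduct_mulVec_nonneg ?_ ?_
  · show _ = _
    rw [real_conjTranspose]
    ext i j
    show r _ = r _
    congr 1
    omega
  · intro xf
    have hxs : star xf = xf := by simp
    rw [hxs]
    set x : ℕ → ℝ := fun k => if h : k < m + 1 then xf ⟨k, h⟩ else 0 with hxdef
    set u : ℕ → (Fin n → ℝ) :=
      fun k => ∑ i ∈ Finset.Ico k (m+1), x i • ((Fᵀ) ^ (i - k) *ᵥ hv H) with hudef
    set φ : ℕ → ℝ := fun k => u k ⬝ᵥ P *ᵥ u k with hφdef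
    -- quadratic form as a double sum
    have hquad : xf ⬝ᵥ (Matrix.of fun i j : Fin (m+1) => r ((i:ℤ) - (j:ℤ)).natAbs) *ᵥ xf
        = ∑ i ∈ Finset.range (m+1), ∑ j ∈ Finset.range (m+1),
            x i * x j * r ((i:ℤ) - (j:ℤ)).natAbs := by
      have step1 : xf ⬝ᵥ (Matrix.of fun i j : Fin (m+1) => r ((i:ℤ) - (j:ℤ)).natAbs) *ᵥ xf
          = ∑ i : Fin (m+1), ∑ j : Fin (m+1),
              x (i:ℕ) * x (j:ℕ) * r (((i:ℕ):ℤ) - ((j:ℕ):ℤ)).natAbs := by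
        simp only [dotProduct, Matrix.mulVec, Matrix.of_apply, Finset.mul_sum]
        refine Finset.sum_congr rfl fun i _ => Finset.sum_congr rfl fun j _ => ?_
        have hxi : x (i:ℕ) = xf i := by
          rw [hxdef]; simp [i.isLt]
        have hxj : x (j:ℕ) = xf j := by
          rw [hxdef]; simp [j.isLt]
        rw [hxi, hxj]
        ring
      rw [step1]
      rw [Fin.sum_univ_eq_sum_range (fun i => ∑ j : Fin (m+1),
        x i * x (j:ℕ) * r ((i:ℤ) - ((j:ℕ):ℤ)).natAbs) (m+1)]
      refine Finset.sum_congr rfl fun i _ => ?_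
      rw [Fin.sum_univ_eq_sum_range (fun j => x i * x j * r ((i:ℤ) - (j:ℤ)).natAbs) (m+1)]
    -- recursion for u
    have hu_succ : ∀ k, k < (m+1) → u k = x k • hv H + Fᵀ *ᵥ u (k+1) := by
      intro k hk
      rw [hudef]
      simp only
      rw [Finset.sum_eq_sum_Ico_succ_bot hk, Nat.sub_self, pow_zero, Matrix.one_mulVec,
        mulVec_sum]
      congr 1
      refine Finset.sum_congr rfl fun i hi => ?_
      rw [Finset.mem_Ico] at hi
      have hie : i - k = (i - (k+1)) + 1 := by omega
      rw [hie, pow_succ', ← Matrix.mulVec_mulVec, Matrix.mulVec_smul]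
    have huM : u (m+1) = 0 := by
      rw [hudef]; simp
    have hudot : ∀ k, u (k+1) ⬝ᵥ Nv N = ∑ i ∈ Finset.Ico (k+1) (m+1), x i * r (i - k) := by
      intro k
      rw [hudef]
      simp only
      rw [dotProduct_sum]
      refine Finset.sum_congr rfl fun i hi => ?_
      rw [Finset.mem_Ico] at hi
      have hie : i - (k+1) + 1 = i - k := by omega
      rw [smul_dotProduct, pow_mulVec_hv_dot_Nv hHFN, smul_eq_mul, hie]
    have hg : ∀ k, k < (m+1) →
        0 ≤ φ (k+1) - φ k + 2 * x k * (u (k+1) ⬝ᵥ Nv N) + r 0 * x k ^ 2 := by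
      intro k hk
      have h0 : 0 ≤ (Sum.elim (u (k+1)) (fun _ : Fin 1 => x k)) ⬝ᵥ
          srBlock H F N r0 P *ᵥ (Sum.elim (u (k+1)) (fun _ : Fin 1 => x k)) := by
        have := hBpsd.dotProduct_mulVec_nonneg (Sum.elim (u (k+1)) (fun _ : Fin 1 => x k))
        simpa using this
      rw [block_quad hr0 P hsymP] at h0
      have hz1 : (Sum.elim (u (k+1)) (fun _ : Fin 1 => x k)) ∘ Sum.inl = u (k+1) := rfl
      have hz2 : (Sum.elim (u (k+1)) (fun _ : Fin 1 => x k)) (Sum.inr 0) = x k := rfl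
      rw [hz1, hz2] at h0
      unfold Mform at h0
      have huk : Fᵀ *ᵥ u (k+1) + x k • hv H = u k := by
        rw [hu_succ k hk, add_comm]
      rw [huk] at h0
      rw [hφdef]
      simp only
      linarith [h0]
    have htel : ∑ k ∈ Finset.range (m+1), (φ (k+1) - φ k) = φ (m+1) - φ 0 :=
      Finset.sum_range_sub φ (m+1)
    have hφM : φ (m+1) = 0 := by
      rw [hφdef]
      simp only
      rw [huM]
      simp
    have hφ0 : 0 ≤ φ 0 := psd_quad hPpsd (u 0)
    have hsum : 0 ≤ ∑ k ∈ Finset.range (m+1),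
        (φ (k+1) - φ k + 2 * x k * (u (k+1) ⬝ᵥ Nv N) + r 0 * x k ^ 2) :=
      Finset.sum_nonneg fun k hk => hg k (Finset.mem_range.1 hk)
    rw [hquad, toeplitz_sum (m+1) x]
    have hter : ∑ k ∈ Finset.range (m+1),
        (φ (k+1) - φ k + 2 * x k * (u (k+1) ⬝ᵥ Nv N) + r 0 * x k ^ 2)
        = (φ (m+1) - φ 0) + ∑ k ∈ Finset.range (m+1),
            (r 0 * x k ^ 2 + 2 * x k * ∑ i ∈ Finset.Ico (k+1) (m+1), x i * r (i - k)) := by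
      rw [← htel, ← Finset.sum_add_distrib]
      refine Finset.sum_congr rfl fun k _ => ?_
      rw [hudot k]
      ring
    rw [hter] at hsum
    linarith [hsum, hφ0, hφM]

end Easy
end KYPaux


/-- **positive real lemma.** For a minimal triple `(H, F, N)`
with all eigenvalues of `F` of modulus `< 1`, the series `r_0 = r₀`,
`r_k = H F^(k-1) N` (`k ≥ 1`) is a covariance series iff `𝒫(H, F, N, r₀)` is
nonempty. -/
theorem stmt_5 {n : ℕ} (hn : 1 ≤ n)
    (H : Matrix (Fin 1) (Fin n) ℝ) (F : Matrix (Fin n) (Fin n) ℝ)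
    (N : Matrix (Fin n) (Fin 1) ℝ) (r0 : ℝ)
    (hobs : IsUnit (Matrix.of fun i j : Fin n => (H * F ^ (i : ℕ)) 0 j))
    (hctr : IsUnit (Matrix.of fun i j : Fin n => (F ^ (j : ℕ) * N) i 0))
    (hF : ∀ μ ∈ spectrum ℂ (F.map (Complex.ofReal)), ‖μ‖ < 1)
    (r : ℕ → ℝ) (hr0 : r 0 = r0)
    (hrk : ∀ k : ℕ, 1 ≤ k → r k = (H * F ^ (k - 1) * N) 0 0) :
    IsCovarianceSeries r ↔ (srSolSet H F N r0).Nonempty := by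
  have hHFN : ∀ d : ℕ, (H * F ^ d * N) 0 0 = r (d + 1) := by
    intro d
    rw [hrk (d + 1) (by omega)]
    simp
  have hO : IsUnit (KYPaux.Ob H F).det :=
    (Matrix.isUnit_iff_isUnit_det (KYPaux.Ob H F)).1 hobs
  constructor
  · intro hcov
    exact KYPaux.hard_dir hcov hHFN hO hr0
  · rintro ⟨P, hP⟩
    exact KYPaux.easy_dir hr0 hHFN hP
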